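/- arXiv:2603.25983 — 8 statements merged into one kernel-verified Lean document; each statement's English description precedes it below -/
import Mathlib

section
/- Suppose B = I − P A is invertible, and let α ∈ ℝ^{m_k} minimize ‖r_k + Σ_{i=1}^{m_k} α_i (r_k − r_{k−i})‖ over all α ∈ ℝ^{m_k} (the AA least-squares problem). Define x_{k+1} = q(x_k) + Σ_{i=1}^{m_k} α_i (q(x_k) − q(x_{k−i})) and r_{k+1} = r(x_{k+1}). Then for all indices 0 ≤ i, j ≤ m_k one has the orthogonality relation ⟨B^{-1} r_{k+1}, r_{k−i} − r_{k−j}⟩ = 0. -/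
open scoped RealInnerProductSpace

/-- Matrix-vector multiplication on Euclidean space. -/
noncomputable def mulV {n : ℕ} (M : Matrix (Fin n) (Fin n) ℝ)
    (v : EuclideanSpace ℝ (Fin n)) : EuclideanSpace ℝ (Fin n) :=
  Matrix.toEuclideanLin M v

lemma mulV_mul {n : ℕ} (M N : Matrix (Fin n) (Fin n) ℝ) (v : EuclideanSpace ℝ (Fin n)) :
    mulV (M * N) v = mulV M (mulV N v) := by
  simp [mulV, Matrix.toEuclideanLin, Matrix.toLin'_mul]

lemma mulV_one {n : ℕ} (v : EuclideanSpace ℝ (Fin n)) : mulV 1 v = v := by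
  simp [mulV, Matrix.toEuclideanLin, Matrix.toLin'_one]

lemma mulV_sub_mat {n : ℕ} (M N : Matrix (Fin n) (Fin n) ℝ) (v : EuclideanSpace ℝ (Fin n)) :
    mulV (M - N) v = mulV M v - mulV N v := by simp [mulV]

lemma mulV_sub_vec {n : ℕ} (M : Matrix (Fin n) (Fin n) ℝ) (v w : EuclideanSpace ℝ (Fin n)) :
    mulV M (v - w) = mulV M v - mulV M w := by simp [mulV]

lemma mulV_add_vec {n : ℕ} (M : Matrix (Fin n) (Fin n) ℝ) (v w : EuclideanSpace ℝ (Fin n)) :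
    mulV M (v + w) = mulV M v + mulV M w := by simp [mulV]

lemma mulV_smul {n : ℕ} (M : Matrix (Fin n) (Fin n) ℝ) (c : ℝ) (v : EuclideanSpace ℝ (Fin n)) :
    mulV M (c • v) = c • mulV M v := by simp [mulV]

lemma mulV_sum {n : ℕ} (M : Matrix (Fin n) (Fin n) ℝ) {ι : Type*} (s : Finset ι)
    (f : ι → EuclideanSpace ℝ (Fin n)) :
    mulV M (∑ i ∈ s, f i) = ∑ i ∈ s, mulV M (f i) := by simp [mulV]

lemma min_orth {E : Type*} [NormedAddCommGroup E] [InnerProductSpace ℝ E]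
    (u w : E) (h : ∀ t : ℝ, ‖u‖ ≤ ‖u + t • w‖) : ⟪u, w⟫ = 0 := by
  by_contra hc
  have hw : w ≠ 0 := by rintro rfl; simp at hc
  have hw0 : (0:ℝ) < ‖w‖ := norm_pos_iff.mpr hw
  have hw2 : (0:ℝ) < ‖w‖^2 := by positivity
  set c : ℝ := ⟪u, w⟫ with hcdef
  set t : ℝ := -c / ‖w‖^2 with ht
  have h1 := h t
  have h2 : ‖u + t • w‖^2 = ‖u‖^2 + 2 * t * c + t^2 * ‖w‖^2 := by
    rw [norm_add_sq_real, real_inner_smul_right, norm_smul]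
    simp [Real.norm_eq_abs, mul_pow, sq_abs]
    ring
  have h3 : ‖u‖^2 ≤ ‖u + t • w‖^2 := by
    apply pow_le_pow_left₀ (norm_nonneg _) h1
  have key : 2 * t * c + t^2 * ‖w‖^2 = -(c^2/‖w‖^2) := by
    rw [ht]; field_simp; ring
  have hpos : (0:ℝ) < c^2 / ‖w‖^2 := div_pos (by positivity) hw2
  rw [h2] at h3
  linarith

/-- orthogonality of the AA least-squares residual. -/
theorem stmt_1 {n : ℕ} (A P : Matrix (Fin n) (Fin n) ℝ)
    (hA : IsUnit A.det) (hP : IsUnit P.det)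
    (b : EuclideanSpace ℝ (Fin n))
    (q r : EuclideanSpace ℝ (Fin n) → EuclideanSpace ℝ (Fin n))
    (hq : ∀ y, q y = y + mulV P (b - mulV A y))
    (hr : ∀ y, r y = y - q y)
    (B : Matrix (Fin n) (Fin n) ℝ) (hB : B = 1 - P * A)
    (hBdet : IsUnit B.det)
    (k m : ℕ) (hm : m ≤ k)
    (x : ℕ → EuclideanSpace ℝ (Fin n))
    (α : ℕ → ℝ)
    (hopt : ∀ a : ℕ → ℝ,
      ‖r (x k) + ∑ i ∈ Finset.Icc 1 m, α i • (r (x k) - r (x (k - i)))‖ ≤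
      ‖r (x k) + ∑ i ∈ Finset.Icc 1 m, a i • (r (x k) - r (x (k - i)))‖)
    (xk1 rk1 : EuclideanSpace ℝ (Fin n))
    (hx : xk1 = q (x k) + ∑ i ∈ Finset.Icc 1 m, α i • (q (x k) - q (x (k - i))))
    (hrk1 : rk1 = r xk1) :
    ∀ i j, i ≤ m → j ≤ m →
      ⟪mulV B⁻¹ rk1, r (x (k - i)) - r (x (k - j))⟫ = 0 := by
  set rbar := r (x k) + ∑ i ∈ Finset.Icc 1 m, α i • (r (x k) - r (x (k - i))) with hrbar
  -- r y = (P*A) y - P b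
  have hrf : ∀ y, r y = mulV (P * A) y - mulV P b := by
    intro y
    rw [hr, hq, mulV_mul, mulV_sub_vec]
    abel
  have hqr : ∀ y, q y = y - r y := by intro y; rw [hr]; abel
  -- L(q y) - c = B (r y)
  have hB1 : ∀ y, mulV (P * A) (q y) - mulV P b = mulV B (r y) := by
    intro y
    rw [hqr, mulV_sub_vec, hB, mulV_sub_mat, mulV_one]
    rw [hrf y, mulV_sub_vec]
    abel
  -- difference version
  have hB2 : ∀ y z, mulV (P * A) (q y - q z) = mulV B (r y - r z) := by
    intro y z
    rw [hqr, hqr, hB, mulV_sub_mat, mulV_one]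
    have h1 : (y - r y) - (z - r z) = (y - z) - (r y - r z) := by abel
    rw [h1, mulV_sub_vec, mulV_sub_vec]
    have h2 : mulV (P * A) y - mulV (P * A) z = r y - r z := by
      rw [hrf y, hrf z]; abel
    rw [h2]
  -- rk1 = B rbar
  have hrk1B : rk1 = mulV B rbar := by
    rw [hrk1, hrf, hx, mulV_add_vec, mulV_sum, hrbar, mulV_add_vec, mulV_sum]
    have h3 : mulV (P * A) (q (x k)) + (∑ i ∈ Finset.Icc 1 m, mulV (P * A) (α i • (q (x k) - q (x (k - i))))) - mulV P b
        = (mulV (P * A) (q (x k)) - mulV P b) + ∑ i ∈ Finset.Icc 1 m, mulV (P * A) (α i • (q (x k) - q (x (k - i)))) := by abel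
    rw [h3, hB1]
    congr 1
    apply Finset.sum_congr rfl
    intro i _
    rw [mulV_smul, mulV_smul, hB2]
  -- B⁻¹ rk1 = rbar
  have hinv : mulV B⁻¹ rk1 = rbar := by
    rw [hrk1B, ← mulV_mul, Matrix.nonsing_inv_mul B hBdet, mulV_one]
  -- orthogonality to each direction
  have horth : ∀ i0, i0 ≤ m → ⟪rbar, r (x k) - r (x (k - i0))⟫ = 0 := by
    intro i0 hi0
    rcases Nat.eq_zero_or_pos i0 with h0 | h1
    · subst h0; simp
    · have hmem : i0 ∈ Finset.Icc 1 m := Finset.mem_Icc.mpr ⟨h1, hi0⟩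
      apply min_orth
      intro t
      have hle := hopt (fun i => α i + if i = i0 then t else 0)
      have hsum : ∑ i ∈ Finset.Icc 1 m,
          ((α i + if i = i0 then t else 0) • (r (x k) - r (x (k - i))))
          = (∑ i ∈ Finset.Icc 1 m, α i • (r (x k) - r (x (k - i))))
            + t • (r (x k) - r (x (k - i0))) := by
        simp only [add_smul, Finset.sum_add_distrib, ite_smul, zero_smul]
        rw [Finset.sum_ite_eq' (Finset.Icc 1 m) i0
          (fun i => t • (r (x k) - r (x (k - i)))), if_pos hmem]
      have heq : r (x k) + ∑ i ∈ Finset.Icc 1 m,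
          ((α i + if i = i0 then t else 0) • (r (x k) - r (x (k - i))))
          = rbar + t • (r (x k) - r (x (k - i0))) := by
        rw [hsum, hrbar]; abel
      rw [heq] at hle
      exact hle
  intro i j hi hj
  rw [hinv]
  have hd : r (x (k - i)) - r (x (k - j))
      = (r (x k) - r (x (k - j))) - (r (x k) - r (x (k - i))) := by abel
  rw [hd, inner_sub_right, horth i hi, horth j hj]
  ring
end

section
/- Suppose B = I − P A is invertible, and let α ∈ ℝ^{m_k} minimize ‖r_k + Σ_{i=1}^{m_k} α_i (r_k − r_{k−i})‖ over all α ∈ ℝ^{m_k} (the AA least-squares problem). Define x_{k+1} = q(x_k) + Σ_{i=1}^{m_k} α_i (q(x_k) − q(x_{k−i})) and r_{k+1} = r(x_{k+1}). Then ‖B^{-1} r_{k+1}‖ ≤ ‖r_k‖. -/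
open scoped RealInnerProductSpace

/-- norm bound for the AA least-squares residual. -/
theorem stmt_2 {n : ℕ} (A P : Matrix (Fin n) (Fin n) ℝ)
    (hA : IsUnit A.det) (hP : IsUnit P.det)
    (b : EuclideanSpace ℝ (Fin n))
    (q r : EuclideanSpace ℝ (Fin n) → EuclideanSpace ℝ (Fin n))
    (hq : ∀ y, q y = y + mulV P (b - mulV A y))
    (hr : ∀ y, r y = y - q y)
    (B : Matrix (Fin n) (Fin n) ℝ) (hB : B = 1 - P * A)
    (hBdet : IsUnit B.det)
    (k m : ℕ) (hm : m ≤ k)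
    (x : ℕ → EuclideanSpace ℝ (Fin n))
    (α : ℕ → ℝ)
    (hopt : ∀ a : ℕ → ℝ,
      ‖r (x k) + ∑ i ∈ Finset.Icc 1 m, α i • (r (x k) - r (x (k - i)))‖ ≤
      ‖r (x k) + ∑ i ∈ Finset.Icc 1 m, a i • (r (x k) - r (x (k - i)))‖)
    (xk1 rk1 : EuclideanSpace ℝ (Fin n))
    (hx : xk1 = q (x k) + ∑ i ∈ Finset.Icc 1 m, α i • (q (x k) - q (x (k - i))))
    (hrk1 : rk1 = r xk1) :
    ‖mulV B⁻¹ rk1‖ ≤ ‖r (x k)‖ := by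
  set C : Matrix (Fin n) (Fin n) ℝ := P * A with hC
  set c : EuclideanSpace ℝ (Fin n) := mulV P b with hc
  have hBv : ∀ v, mulV B v = v - mulV C v := by
    intro v; rw [hB, mulV_sub_mat, mulV_one]
  have hrC : ∀ y, r y = mulV C y - c := by
    intro y
    have : mulV P (b - mulV A y) = c - mulV C y := by
      rw [hC, mulV_mul, hc, mulV]; rw [map_sub]; rfl
    rw [hr y, hq y, this]; abel
  set tY : EuclideanSpace ℝ (Fin n) :=
    x k + ∑ i ∈ Finset.Icc 1 m, α i • (x k - x (k - i)) with htY
  set tR : EuclideanSpace ℝ (Fin n) :=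
    r (x k) + ∑ i ∈ Finset.Icc 1 m, α i • (r (x k) - r (x (k - i))) with htR
  have key : tR = mulV C tY - c := by
    have h1 : mulV C tY
        = mulV C (x k) + ∑ i ∈ Finset.Icc 1 m, α i • (mulV C (x k) - mulV C (x (k - i))) := by
      simp [htY, mulV, map_add, map_sum, map_smul, map_sub]
    rw [h1, htR]
    simp only [hrC, sub_sub_sub_cancel_right]
    abel
  have hq' : ∀ y, q y = y - r y := by intro y; rw [hr y]; abel
  have hx' : xk1 = tY - tR := by
    rw [hx]
    simp only [hq', sub_sub_sub_comm, smul_sub, Finset.sum_sub_distrib, htY, htR]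
    abel
  have hr1 : rk1 = mulV B tR := by
    rw [hrk1, hrC, hx']
    rw [show mulV C (tY - tR) = mulV C tY - mulV C tR by rw [mulV]; rw [map_sub]; rfl]
    rw [hBv, key]
    abel
  have hinv : mulV B⁻¹ rk1 = tR := by
    rw [hr1, ← mulV_mul, Matrix.nonsing_inv_mul B hBdet, mulV_one]
  rw [hinv]
  have := hopt (fun _ => 0)
  simpa using this
end

section
/- Suppose B = I − P A is invertible and its operator 2-norm satisfies ‖B‖ < 1. Let α ∈ ℝ^{m_k} minimize ‖r_k + Σ_{i=1}^{m_k} α_i (r_k − r_{k−i})‖ over all α ∈ ℝ^{m_k} (the AA least-squares problem), define x_{k+1} = q(x_k) + Σ_{i=1}^{m_k} α_i (q(x_k) − q(x_{k−i})) and r_{k+1} = r(x_{k+1}), and assume r_k ≠ 0. Then ‖r_{k+1}‖ < ‖r_k‖. -/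
open scoped RealInnerProductSpace

open scoped Matrix.Norms.L2Operator

/-!
The residual `r y = P (A y - b)` is affine with linear part `L = P A`, and the Richardson map is
`q = id - r`. Hence `r ∘ q = (1 - L) ∘ r = B ∘ r`, and since `r` preserves affine combinations, the
residual of the Anderson update is `B v`, where `v = r_k + ∑ αᵢ (r_k - r_{k-i})` is the residual of
the least-squares problem. Taking all coefficients zero in that problem gives `‖v‖ ≤ ‖r_k‖`, so
`‖r_{k+1}‖ ≤ ‖B‖ ‖v‖ ≤ ‖B‖ ‖r_k‖ < ‖r_k‖`.
-/

section AffineResidual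

variable {R E : Type*} [Ring R] [AddCommGroup E] [Module R E]
  (L : E →ₗ[R] E) (c : E) {r q : E → E}

theorem residual_richardson_step (hr : ∀ y, r y = L y - c) (hq : ∀ y, q y = y - r y) (y : E) :
    r (q y) = r y - L (r y) := by
  rw [hr (q y), hq y, map_sub, hr y]
  abel

theorem residual_anderson_update (hr : ∀ y, r y = L y - c) (hq : ∀ y, q y = y - r y)
    {ι : Type*} (s : Finset ι) (α : ι → R) (x : E) (y : ι → E) :
    let v := r x + ∑ i ∈ s, α i • (r x - r (y i))
    r (q x + ∑ i ∈ s, α i • (q x - q (y i))) = v - L v := by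
  have hdiff : ∀ z w, L (q z - q w) = r (q z) - r (q w) := fun z w => by
    rw [map_sub, hr, hr]
    abel
  have hsplit : r (q x + ∑ i ∈ s, α i • (q x - q (y i))) =
      r (q x) + ∑ i ∈ s, α i • (r (q x) - r (q (y i))) := by
    rw [hr, map_add, map_sum]
    simp only [map_smul, hdiff]
    rw [hr (q x)]
    abel
  rw [hsplit]
  simp only [residual_richardson_step L c hr hq, map_add, map_sum, map_smul, map_sub, smul_sub,
    Finset.sum_sub_distrib]
  abel

end AffineResidual

theorem stmt_3_general {n : ℕ} (A P : Matrix (Fin n) (Fin n) ℝ)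
    (b : EuclideanSpace ℝ (Fin n))
    (q r : EuclideanSpace ℝ (Fin n) → EuclideanSpace ℝ (Fin n))
    (hq : ∀ y, q y = y + mulV P (b - mulV A y))
    (hr : ∀ y, r y = y - q y)
    (B : Matrix (Fin n) (Fin n) ℝ) (hB : B = 1 - P * A)
    (hBnorm : ‖B‖ < 1)
    (k m : ℕ)
    (x : ℕ → EuclideanSpace ℝ (Fin n))
    (α : ℕ → ℝ)
    (hopt : ∀ a : ℕ → ℝ,
      ‖r (x k) + ∑ i ∈ Finset.Icc 1 m, α i • (r (x k) - r (x (k - i)))‖ ≤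
      ‖r (x k) + ∑ i ∈ Finset.Icc 1 m, a i • (r (x k) - r (x (k - i)))‖)
    (xk1 rk1 : EuclideanSpace ℝ (Fin n))
    (hx : xk1 = q (x k) + ∑ i ∈ Finset.Icc 1 m, α i • (q (x k) - q (x (k - i))))
    (hrk1 : rk1 = r xk1)
    (hrk : r (x k) ≠ 0) :
    ‖rk1‖ < ‖r (x k)‖ := by
  set L := Matrix.toEuclideanCLM (𝕜 := ℝ) (P * A) with hLdef
  have hres : ∀ y, r y = L y - mulV P b := fun y => by
    have hPsub : mulV P (b - mulV A y) = mulV P b - mulV P (mulV A y) := map_sub _ _ _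
    have hPA : L y = mulV P (mulV A y) := by rw [hLdef, map_mul]; rfl
    rw [hr, hq, hPsub, hPA]
    abel
  have hstep : ∀ y, q y = y - r y := fun y => by rw [hr]; abel
  set v := r (x k) + ∑ i ∈ Finset.Icc 1 m, α i • (r (x k) - r (x (k - i)))
  have hrk1_eq : rk1 = Matrix.toEuclideanCLM (𝕜 := ℝ) B v := by
    rw [hrk1, hx, residual_anderson_update (L : _ →ₗ[ℝ] _) _ hres hstep, hB, map_sub, map_one]
    rfl
  have hv : ‖v‖ ≤ ‖r (x k)‖ := by simpa using hopt 0
  calc ‖rk1‖ ≤ ‖B‖ * ‖v‖ := hrk1_eq ▸ (Matrix.toEuclideanCLM (𝕜 := ℝ) B).le_opNorm v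
    _ ≤ ‖B‖ * ‖r (x k)‖ := by gcongr
    _ < ‖r (x k)‖ := mul_lt_of_lt_one_left (norm_pos_iff.mpr hrk) hBnorm

/-- strict decrease of the AA preconditioned residual when ‖B‖ < 1. -/
theorem stmt_3 {n : ℕ} (A P : Matrix (Fin n) (Fin n) ℝ)
    (hA : IsUnit A.det) (hP : IsUnit P.det)
    (b : EuclideanSpace ℝ (Fin n))
    (q r : EuclideanSpace ℝ (Fin n) → EuclideanSpace ℝ (Fin n))
    (hq : ∀ y, q y = y + mulV P (b - mulV A y))
    (hr : ∀ y, r y = y - q y)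
    (B : Matrix (Fin n) (Fin n) ℝ) (hB : B = 1 - P * A)
    (hBdet : IsUnit B.det) (hBnorm : ‖B‖ < 1)
    (k m : ℕ) (hm : m ≤ k)
    (x : ℕ → EuclideanSpace ℝ (Fin n))
    (α : ℕ → ℝ)
    (hopt : ∀ a : ℕ → ℝ,
      ‖r (x k) + ∑ i ∈ Finset.Icc 1 m, α i • (r (x k) - r (x (k - i)))‖ ≤
      ‖r (x k) + ∑ i ∈ Finset.Icc 1 m, a i • (r (x k) - r (x (k - i)))‖)
    (xk1 rk1 : EuclideanSpace ℝ (Fin n))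
    (hx : xk1 = q (x k) + ∑ i ∈ Finset.Icc 1 m, α i • (q (x k) - q (x (k - i))))
    (hrk1 : rk1 = r xk1)
    (hrk : r (x k) ≠ 0) :
    ‖rk1‖ < ‖r (x k)‖ :=
  stmt_3_general A P b q r hq hr B hB hBnorm k m x α hopt xk1 rk1 hx hrk1 hrk
end

section
/- Let β ∈ ℝ^{m_k+1} minimize ‖(A q(x_k) − b) + Σ_{i=0}^{m_k} β_i ((A q(x_k) − b) − (A x_{k−i} − b))‖ over all β ∈ ℝ^{m_k+1} (the NGMRES least-squares problem), define x_{k+1} = q(x_k) + Σ_{i=0}^{m_k} β_i (q(x_k) − x_{k−i}) and r̄_{k+1} = A x_{k+1} − b. Then the classical residual norms are nonincreasing: ‖r̄_{k+1}‖ ≤ ‖r̄_k‖. -/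
open scoped RealInnerProductSpace

lemma mulV_add {n : ℕ} (M : Matrix (Fin n) (Fin n) ℝ) (u v : EuclideanSpace ℝ (Fin n)) :
    mulV M (u + v) = mulV M u + mulV M v := by simp [mulV]

lemma mulV_sub {n : ℕ} (M : Matrix (Fin n) (Fin n) ℝ) (u v : EuclideanSpace ℝ (Fin n)) :
    mulV M (u - v) = mulV M u - mulV M v := by simp [mulV]

/-- nonincreasing classical residuals for NGMRES. -/
theorem stmt_6 {n : ℕ} (A P : Matrix (Fin n) (Fin n) ℝ)
    (hA : IsUnit A.det) (hP : IsUnit P.det)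
    (b : EuclideanSpace ℝ (Fin n))
    (q rb : EuclideanSpace ℝ (Fin n) → EuclideanSpace ℝ (Fin n))
    (hq : ∀ y, q y = y + mulV P (b - mulV A y))
    (hrb : ∀ y, rb y = mulV A y - b)
    (k m : ℕ) (hm : m ≤ k)
    (x : ℕ → EuclideanSpace ℝ (Fin n))
    (β : ℕ → ℝ)
    (hopt : ∀ c : ℕ → ℝ,
      ‖(mulV A (q (x k)) - b) + ∑ i ∈ Finset.range (m + 1),
          β i • ((mulV A (q (x k)) - b) - (mulV A (x (k - i)) - b))‖ ≤
      ‖(mulV A (q (x k)) - b) + ∑ i ∈ Finset.range (m + 1),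
          c i • ((mulV A (q (x k)) - b) - (mulV A (x (k - i)) - b))‖)
    (xk1 rk1 : EuclideanSpace ℝ (Fin n))
    (hx : xk1 = q (x k) + ∑ i ∈ Finset.range (m + 1), β i • (q (x k) - x (k - i)))
    (hrk1 : rk1 = mulV A xk1 - b) :
    ‖rk1‖ ≤ ‖rb (x k)‖ := by
  have mulV_sum : ∀ (f : ℕ → EuclideanSpace ℝ (Fin n)),
      mulV A (∑ i ∈ Finset.range (m + 1), f i) = ∑ i ∈ Finset.range (m + 1), mulV A (f i) :=
    fun f => map_sum (Matrix.toEuclideanLin A) f (Finset.range (m + 1))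
  have key : rk1 = (mulV A (q (x k)) - b) + ∑ i ∈ Finset.range (m + 1),
      β i • ((mulV A (q (x k)) - b) - (mulV A (x (k - i)) - b)) := by
    rw [hrk1, hx, mulV_add, mulV_sum]
    have h1 : ∀ i, mulV A (β i • (q (x k) - x (k - i)))
        = β i • ((mulV A (q (x k)) - b) - (mulV A (x (k - i)) - b)) := by
      intro i
      rw [mulV_smul, mulV_sub]
      congr 1
      abel
    simp only [h1]
    abel
  have hc := hopt (fun i => if i = 0 then (-1 : ℝ) else 0)
  have hsum : ∑ i ∈ Finset.range (m + 1),
      (if i = 0 then (-1 : ℝ) else 0) • ((mulV A (q (x k)) - b) - (mulV A (x (k - i)) - b))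
      = -((mulV A (q (x k)) - b) - (mulV A (x (k - 0)) - b)) := by
    rw [Finset.sum_eq_single 0]
    · simp
    · intro i _ hi
      simp [hi]
    · simp
  rw [hsum] at hc
  have hrhs : (mulV A (q (x k)) - b) + -((mulV A (q (x k)) - b) - (mulV A (x (k - 0)) - b))
      = rb (x k) := by
    rw [hrb]
    simp
  rw [hrhs] at hc
  rw [key]
  exact hc
end

section
/- Assume the matrix AP satisfies (AP)ᵀ = AP, or AP = τ I + S for some τ ∈ ℝ and some matrix S with Sᵀ = −S. Fix a depth m ∈ ℤ^+ and x_0 ∈ ℝ^n, and let (x_k) be the NGMRES(m) sequence: for each k, x_{k+1} = q(x_k) + Σ_{i=0}^{m_k} β_i^{(k)} (q(x_k) − x_{k−i}) with m_k = min{k, m}, where β^{(k)} ∈ ℝ^{m_k+1} minimizes ‖A x_{k+1} − b‖ over all coefficient vectors. Let (x_k^{Gr}) be a right-preconditioned GMRES sequence with x_0^{Gr} = x_0: for each k, x_k^{Gr} ∈ x_0 + P · K_k(AP, r̄_0) and ‖A x_k^{Gr} − b‖ ≤ ‖A y − b‖ for every y ∈ x_0 + P · K_k(AP, r̄_0), where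 r̄_0 = A x_0 − b; write r̄_k^{Gr} = A x_k^{Gr} − b. Assume for some k* ∈ ℤ^+ that r̄_{k*−1}^{Gr} ≠ 0 and ‖r̄_k^{Gr}‖ < ‖r̄_{k−1}^{Gr}‖ for all integers k with 0 < k < k*. Then x_k = x_k^{Gr} for all 0 ≤ k ≤ k*. -/
open scoped RealInnerProductSpace

/-- Krylov subspace `K_k(M, v) = span {v, M v, …, M^(k-1) v}`. -/
noncomputable def Krylov {n : ℕ} (M : Matrix (Fin n) (Fin n) ℝ)
    (v : EuclideanSpace ℝ (Fin n)) (k : ℕ) : Submodule ℝ (EuclideanSpace ℝ (Fin n)) :=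
  Submodule.span ℝ (Set.range fun i : Fin k => mulV (M ^ (i : ℕ)) v)

/-!
Write `M = A P`, `r₀ = A x₀ - b`, and parametrize iterates as `x₀ + P z`, so that their residuals
are `r₀ + M z`. The GMRES residual `r_k` is orthogonal to `M K_k`. Since `Mᵀ = α + β M`
(`Mᵀ = M`, or `Mᵀ = 2τ - M` in the shifted skew case), this gives `M r_k ⟂ M K_{k-1}`; also
`M (z_k - z_{k-1}) = r_k - r_{k-1} ⟂ M K_{k-1}`. Strict decrease of the GMRES residuals makes
`K_{k+1} = K_{k-1} + span {r_k, z_k - z_{k-1}}`, so the best residual over the two-dimensional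
correction `z_k + span {r_k, z_k - z_{k-1}}` is already orthogonal to `M K_{k+1}`: it is the GMRES
residual `r_{k+1}`. NGMRES reaches exactly this correction through `q(x_k) - x_k` and
`q(x_k) - x_{k-1}`, while all its iterates stay in `x₀ + P K_{k+1}`; the minimal residual there is
unique, and `A` is injective.
-/

open Matrix

section mulV

variable {n : ℕ} (M N : Matrix (Fin n) (Fin n) ℝ) (u w : EuclideanSpace ℝ (Fin n))

lemma mulV_add_s10 : mulV M (u + w) = mulV M u + mulV M w := map_add _ _ _
lemma mulV_sub_s10 : mulV M (u - w) = mulV M u - mulV M w := map_sub _ _ _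
lemma mulV_neg : mulV M (-w) = -mulV M w := map_neg _ _
lemma mulV_smul_s10 (c : ℝ) : mulV M (c • w) = c • mulV M w := map_smul _ _ _

lemma mulV_one_s10 : mulV 1 w = w := by
  simp [mulV]

lemma mulV_mulV : mulV M (mulV N w) = mulV (M * N) w := by
  simp [mulV]

lemma inner_mulV_left : ⟪mulV M u, w⟫ = ⟪u, mulV Mᵀ w⟫ := by
  rw [← Matrix.conjTranspose_eq_transpose_of_trivial, mulV, mulV,
    Matrix.toEuclideanLin_conjTranspose_eq_adjoint, LinearMap.adjoint_inner_right]

variable {M} {α β : ℝ}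

lemma inner_mulV_mulV_of_transpose_eq (hM : Mᵀ = α • 1 + β • M) :
    ⟪mulV M u, mulV M w⟫ = α * ⟪u, mulV M w⟫ + β * ⟪u, mulV M (mulV M w)⟫ := by
  rw [inner_mulV_left, hM]
  simp [mulV, inner_add_right, real_inner_smul_right]

end mulV

lemma exists_transpose_eq_smul_one_add_smul {n : ℕ} {M : Matrix (Fin n) (Fin n) ℝ}
    (h : Mᵀ = M ∨ ∃ (τ : ℝ) (S : Matrix (Fin n) (Fin n) ℝ), Sᵀ = -S ∧ M = τ • 1 + S) :
    ∃ α β : ℝ, Mᵀ = α • 1 + β • M := by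
  rcases h with h | ⟨τ, S, hS, rfl⟩
  · exact ⟨0, 1, by simp [h]⟩
  · refine ⟨2 * τ, -1, ?_⟩
    rw [transpose_add, transpose_smul, transpose_one, hS]
    module

section Krylov

variable {n : ℕ} {M : Matrix (Fin n) (Fin n) ℝ} {v : EuclideanSpace ℝ (Fin n)}

lemma Krylov_zero : Krylov M v 0 = ⊥ := by
  simp [Krylov]

@[simp]
lemma mem_Krylov_zero {w : EuclideanSpace ℝ (Fin n)} : w ∈ Krylov M v 0 ↔ w = 0 := by
  simp [Krylov]

lemma Krylov_mono {j k : ℕ} (h : j ≤ k) : Krylov M v j ≤ Krylov M v k :=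
  Submodule.span_mono <| Set.range_subset_iff.2 fun i => ⟨Fin.castLE h i, rfl⟩

lemma Krylov_succ (k : ℕ) :
    Krylov M v (k + 1) = Krylov M v k ⊔ Submodule.span ℝ {mulV (M ^ k) v} := by
  rw [Krylov, Krylov, ← Submodule.span_union]
  congr 1
  ext w
  simp [Fin.exists_fin_succ', or_comm, eq_comm]

lemma mulV_mem_Krylov_succ {k : ℕ} {w : EuclideanSpace ℝ (Fin n)} (hw : w ∈ Krylov M v k) :
    mulV M w ∈ Krylov M v (k + 1) := by
  have hle : Krylov M v k ≤ (Krylov M v (k + 1)).comap (toEuclideanLin M) := by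
    refine Submodule.span_le.2 (Set.range_subset_iff.2 fun i => ?_)
    change mulV M (mulV (M ^ (i : ℕ)) v) ∈ Krylov M v (k + 1)
    rw [mulV_mulV, ← pow_succ']
    exact Submodule.subset_span ⟨i.succ, rfl⟩
  exact hle hw

lemma self_mem_Krylov_succ (k : ℕ) : v ∈ Krylov M v (k + 1) :=
  Submodule.subset_span ⟨0, by simp [mulV]⟩

lemma mulV_mem_Krylov_of_mem_pred {k : ℕ} {w : EuclideanSpace ℝ (Fin n)}
    (hw : w ∈ Krylov M v (k - 1)) : mulV M w ∈ Krylov M v k := by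
  rcases k with _ | k
  · simp [mem_Krylov_zero.1 hw, mulV]
  · exact mulV_mem_Krylov_succ hw

lemma residual_mem_Krylov_succ {k : ℕ} {z : EuclideanSpace ℝ (Fin n)} (hz : z ∈ Krylov M v k) :
    v + mulV M z ∈ Krylov M v (k + 1) :=
  add_mem (self_mem_Krylov_succ k) (mulV_mem_Krylov_succ hz)

lemma Krylov_succ_le_sup_span_pair {k : ℕ} {z z' : EuclideanSpace ℝ (Fin n)}
    (hz : z ∈ Krylov M v k) (hz' : z' ∈ Krylov M v (k - 1))
    (hnew : 0 < k → z ∉ Krylov M v (k - 1)) :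
    Krylov M v (k + 1) ≤ Krylov M v (k - 1) ⊔ Submodule.span ℝ {v + mulV M z, z - z'} := by
  set S := Krylov M v (k - 1) ⊔ Submodule.span ℝ {v + mulV M z, z - z'}
  have hpair : v + mulV M z ∈ S ∧ z - z' ∈ S :=
    ⟨Submodule.mem_sup_right (Submodule.subset_span (by simp)),
      Submodule.mem_sup_right (Submodule.subset_span (by simp))⟩
  rcases k with _ | p
  · rw [mem_Krylov_zero] at hz
    rw [Krylov_succ, Krylov_zero, bot_sup_eq, Submodule.span_singleton_le_iff_mem]
    simpa [hz, mulV] using hpair.1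
  · simp only [Nat.add_sub_cancel] at hpair hz' hnew ⊢
    obtain ⟨y, hy, _, hg, rfl⟩ := Submodule.mem_sup.1 (Krylov_succ (M := M) (v := v) p ▸ hz)
    obtain ⟨c, rfl⟩ := Submodule.mem_span_singleton.1 hg
    have hc : c ≠ 0 := by
      rintro rfl
      simp [hy] at hnew
    have hyS : ∀ {u}, u ∈ Krylov M v p → u ∈ S := fun hu => Submodule.mem_sup_left hu
    -- the new direction `M^p v` and its image are recovered from `z - z'` and the residual
    have hg : mulV (M ^ p) v ∈ S := by
      rw [← Submodule.smul_mem_iff _ hc, ← Submodule.add_mem_iff_left _ (hyS (sub_mem hy hz'))]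
      convert hpair.2 using 1
      abel
    have hK : Krylov M v (p + 1) ≤ S := by
      rw [Krylov_succ]
      exact sup_le (fun u hu => hyS hu) ((Submodule.span_singleton_le_iff_mem _ _).2 hg)
    rw [Krylov_succ, sup_le_iff, Submodule.span_singleton_le_iff_mem]
    refine ⟨hK, ?_⟩
    rw [← Submodule.smul_mem_iff _ hc,
      ← Submodule.add_mem_iff_left _ (hK (residual_mem_Krylov_succ hy))]
    convert hpair.1 using 1
    rw [mulV_add_s10, mulV_smul_s10, pow_succ', ← mulV_mulV]
    abel

end Krylov

section LeastSquares

variable {F : Type*} [NormedAddCommGroup F] [InnerProductSpace ℝ F]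

lemma inner_eq_zero_of_forall_norm_le_norm_add_smul {r w : F}
    (h : ∀ t : ℝ, ‖r‖ ≤ ‖r + t • w‖) : ⟪r, w⟫ = 0 := by
  have hc : 0 < ‖w‖ ^ 2 + 1 := by positivity
  -- the `+ 1` in the step length spares a case split on `w = 0`
  have key := h (-⟪r, w⟫ / (‖w‖ ^ 2 + 1))
  rw [← sq_le_sq₀ (norm_nonneg _) (norm_nonneg _), norm_add_sq_real, real_inner_smul_right,
    norm_smul, mul_pow, Real.norm_eq_abs, sq_abs] at key
  have hsq : ⟪r, w⟫ ^ 2 * (‖w‖ ^ 2 + 2) ≤ 0 := by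
    field_simp at key
    nlinarith
  nlinarith [sq_nonneg ⟪r, w⟫, sq_nonneg ‖w‖]

lemma norm_le_norm_add_of_inner_eq_zero {r s : F} (h : ⟪r, s⟫ = 0) : ‖r‖ ≤ ‖r + s‖ := by
  rw [← sq_le_sq₀ (norm_nonneg _) (norm_nonneg _), norm_add_sq_real, h]
  nlinarith [sq_nonneg ‖s‖]

end LeastSquares

section GMRES

variable {n : ℕ} {M : Matrix (Fin n) (Fin n) ℝ} {v : EuclideanSpace ℝ (Fin n)}

/-- `v` plays the part of the initial residual `A x₀ - b` and `z` the Krylov coordinate of an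
iterate `x₀ + P z`, whose residual is then `v + (A P) z`. -/
def IsGMRESIterate (M : Matrix (Fin n) (Fin n) ℝ) (v : EuclideanSpace ℝ (Fin n)) (k : ℕ)
    (z : EuclideanSpace ℝ (Fin n)) : Prop :=
  z ∈ Krylov M v k ∧ ∀ w ∈ Krylov M v k, ‖v + mulV M z‖ ≤ ‖v + mulV M w‖

namespace IsGMRESIterate

variable {k : ℕ} {z w : EuclideanSpace ℝ (Fin n)}

lemma inner_eq_zero (h : IsGMRESIterate M v k z) (hw : w ∈ Krylov M v k) :
    ⟪v + mulV M z, mulV M w⟫ = 0 :=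
  inner_eq_zero_of_forall_norm_le_norm_add_smul fun t => by
    simpa [mulV_add_s10, mulV_smul_s10, add_assoc] using
      h.2 (z + t • w) (add_mem h.1 (Submodule.smul_mem _ t hw))

lemma residual_eq_of_norm_le (h : IsGMRESIterate M v k z) (hw : w ∈ Krylov M v k)
    (hle : ‖v + mulV M w‖ ≤ ‖v + mulV M z‖) : v + mulV M w = v + mulV M z := by
  have hsplit : v + mulV M w = (v + mulV M z) + mulV M (w - z) := by
    rw [mulV_sub_s10]
    abel
  rw [hsplit, ← sq_le_sq₀ (norm_nonneg _) (norm_nonneg _), norm_add_sq_real,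
    h.inner_eq_zero (sub_mem hw h.1)] at hle
  have hzero : ‖mulV M (w - z)‖ = 0 := by nlinarith [norm_nonneg (mulV M (w - z))]
  rw [hsplit, norm_eq_zero.1 hzero, add_zero]

end IsGMRESIterate

variable {α β : ℝ} {z : ℕ → EuclideanSpace ℝ (Fin n)} {k : ℕ}

lemma inner_mulV_mulV_eq_zero_of_mem_span_pair (hM : Mᵀ = α • 1 + β • M)
    (hG : ∀ j, IsGMRESIterate M v j (z j)) {s u : EuclideanSpace ℝ (Fin n)}
    (hs : s ∈ Submodule.span ℝ {v + mulV M (z k), z k - z (k - 1)})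
    (hu : u ∈ Krylov M v (k - 1)) :
    ⟪mulV M s, mulV M u⟫ = 0 := by
  obtain ⟨a, c, rfl⟩ := Submodule.mem_span_pair.1 hs
  have hu' : u ∈ Krylov M v k := Krylov_mono (Nat.sub_le k 1) hu
  have hres : ⟪mulV M (v + mulV M (z k)), mulV M u⟫ = 0 := by
    rw [inner_mulV_mulV_of_transpose_eq _ _ hM, (hG k).inner_eq_zero hu',
      (hG k).inner_eq_zero (mulV_mem_Krylov_of_mem_pred hu)]
    ring
  have hdiff : ⟪mulV M (z k - z (k - 1)), mulV M u⟫ = 0 := by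
    have hsub : mulV M (z k - z (k - 1)) = (v + mulV M (z k)) - (v + mulV M (z (k - 1))) := by
      rw [mulV_sub_s10]
      abel
    rw [hsub, inner_sub_left, (hG k).inner_eq_zero hu', (hG (k - 1)).inner_eq_zero hu, sub_zero]
  rw [mulV_add_s10, mulV_smul_s10, mulV_smul_s10, inner_add_left, real_inner_smul_left, real_inner_smul_left,
    hres, hdiff]
  ring

theorem exists_mem_span_pair_norm_residual_le (hM : Mᵀ = α • 1 + β • M)
    (hG : ∀ j, IsGMRESIterate M v j (z j)) (hnew : 0 < k → z k ∉ Krylov M v (k - 1)) :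
    ∃ t ∈ Submodule.span ℝ {v + mulV M (z k), z k - z (k - 1)},
      ‖v + mulV M (z k + t)‖ ≤ ‖v + mulV M (z (k + 1))‖ := by
  set T := Submodule.span ℝ {v + mulV M (z k), z k - z (k - 1)}
  obtain ⟨p, hp, e, he, hsplit⟩ := (T.map (toEuclideanLin M)).exists_add_mem_mem_orthogonal
    (v + mulV M (z k))
  obtain ⟨t, ht, rfl⟩ := Submodule.mem_map.1 hp
  have he_eq : e = (v + mulV M (z k)) - mulV M t := by
    rw [hsplit, mulV]
    abel
  have hres : v + mulV M (z k + -t) = e := by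
    rw [he_eq, mulV_add_s10, mulV_neg]
    abel
  have horth : ∀ u ∈ Krylov M v (k - 1) ⊔ T, ⟪e, mulV M u⟫ = 0 := by
    intro u hu
    obtain ⟨u₁, hu₁, u₂, hu₂, rfl⟩ := Submodule.mem_sup.1 hu
    have he₁ : ⟪e, mulV M u₁⟫ = 0 := by
      rw [he_eq, inner_sub_left, (hG k).inner_eq_zero (Krylov_mono (Nat.sub_le k 1) hu₁),
        inner_mulV_mulV_eq_zero_of_mem_span_pair hM hG ht hu₁, sub_zero]
    have he₂ : ⟪e, mulV M u₂⟫ = 0 :=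
      Submodule.inner_left_of_mem_orthogonal (Submodule.mem_map_of_mem hu₂) he
    rw [mulV_add_s10, inner_add_right, he₁, he₂, add_zero]
  refine ⟨-t, T.neg_mem ht, ?_⟩
  have hmem : z (k + 1) - (z k + -t) ∈ Krylov M v (k - 1) ⊔ T := by
    have hK := Krylov_succ_le_sup_span_pair (hG k).1 (hG (k - 1)).1 hnew
    refine sub_mem (hK (hG (k + 1)).1) (add_mem (hK (Krylov_mono k.le_succ (hG k).1)) ?_)
    exact Submodule.mem_sup_right (T.neg_mem ht)
  have hgap : v + mulV M (z (k + 1)) = e + mulV M (z (k + 1) - (z k + -t)) := by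
    rw [← hres, mulV_sub_s10]
    abel
  rw [hres, hgap]
  exact norm_le_norm_add_of_inner_eq_zero (horth _ hmem)

end GMRES

section NGMRES

variable {E F : Type*} [AddCommGroup E] [Module ℝ E] [AddCommGroup F] [Module ℝ F]

/-- The NGMRES(m) update, with `y` standing for `q(x_k)`. -/
def ngmresCombination (m k : ℕ) (y : E) (x : ℕ → E) (c : ℕ → ℝ) : E :=
  y + ∑ i ∈ Finset.range (min k m + 1), c i • (y - x (k - i))

variable {m k : ℕ}

lemma ngmresCombination_affine (f : E →ₗ[ℝ] F) (x₀ : F) {x : ℕ → F} {z : ℕ → E} (y : E)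
    (c : ℕ → ℝ) (hx : ∀ j ≤ k, x j = x₀ + f (z j)) :
    ngmresCombination m k (x₀ + f y) x c = x₀ + f (ngmresCombination m k y z c) := by
  rw [ngmresCombination, ngmresCombination, Finset.sum_congr rfl fun i _ => by
    rw [hx (k - i) (Nat.sub_le k i), add_sub_add_left_eq_sub, ← map_sub, ← map_smul]]
  simp only [map_add, map_sum, add_assoc]

lemma ngmresCombination_mem (S : Submodule ℝ E) {y : E} {x : ℕ → E} (c : ℕ → ℝ) (hy : y ∈ S)
    (hx : ∀ j ≤ k, x j ∈ S) : ngmresCombination m k y x c ∈ S :=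
  add_mem hy <| sum_mem fun i _ => S.smul_mem _ (sub_mem hy (hx (k - i) (Nat.sub_le k i)))

lemma exists_ngmresCombination_eq (hm : 0 < m) (x : ℕ → E) (r : E) (a b : ℝ) :
    ∃ c, ngmresCombination m k (x k - r) x c = x k + (a • r + b • (x k - x (k - 1))) := by
  rcases k with _ | k
  · refine ⟨fun _ => -(1 + a), ?_⟩
    simp only [ngmresCombination, Nat.zero_min, zero_add, Finset.sum_range_one]
    module
  · refine ⟨fun i => if i = 0 then -(1 + a + b) else if i = 1 then b else 0, ?_⟩
    rw [ngmresCombination, Finset.sum_eq_add_of_mem 0 1 (by simp)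
      (by rw [Finset.mem_range]; omega) zero_ne_one fun i _ hi => by simp [hi.1, hi.2]]
    simp only [if_true, one_ne_zero, if_false, Nat.sub_zero, Nat.add_sub_cancel]
    module

end NGMRES

section Equivalence

variable {n : ℕ} {α β : ℝ} {m k : ℕ}

lemma mulV_injective {A : Matrix (Fin n) (Fin n) ℝ} (hA : IsUnit A.det) :
    Function.Injective (mulV A) := fun u w h => by
  have h' := congrArg (mulV A⁻¹) h
  rwa [mulV_mulV, mulV_mulV, Matrix.nonsing_inv_mul A hA, mulV_one_s10, mulV_one_s10] at h'

lemma mulV_add_mulV_sub (A P : Matrix (Fin n) (Fin n) ℝ) (x₀ w b : EuclideanSpace ℝ (Fin n)) :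
    mulV A (x₀ + mulV P w) - b = (mulV A x₀ - b) + mulV (A * P) w := by
  rw [mulV_add_s10, mulV_mulV]
  abel

theorem ngmres_residual_eq_gmres {M : Matrix (Fin n) (Fin n) ℝ} {v : EuclideanSpace ℝ (Fin n)}
    {z : ℕ → EuclideanSpace ℝ (Fin n)} (hM : Mᵀ = α • 1 + β • M) (hm : 0 < m)
    (hG : ∀ j, IsGMRESIterate M v j (z j)) (hnew : 0 < k → z k ∉ Krylov M v (k - 1))
    {ζ : EuclideanSpace ℝ (Fin n)} (hζ : ζ ∈ Krylov M v (k + 1))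
    (hopt : ∀ c, ‖v + mulV M ζ‖ ≤
      ‖v + mulV M (ngmresCombination m k (z k - (v + mulV M (z k))) z c)‖) :
    v + mulV M ζ = v + mulV M (z (k + 1)) := by
  obtain ⟨t, ht, hle⟩ := exists_mem_span_pair_norm_residual_le hM hG hnew
  obtain ⟨a, b, rfl⟩ := Submodule.mem_span_pair.1 ht
  obtain ⟨c, hc⟩ := exists_ngmresCombination_eq hm z (v + mulV M (z k)) a b
  exact (hG (k + 1)).residual_eq_of_norm_le hζ ((hopt c).trans (hc ▸ hle))

theorem ngmres_succ_eq_gmres {A P : Matrix (Fin n) (Fin n) ℝ} (hA : IsUnit A.det)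
    (hM : (A * P)ᵀ = α • 1 + β • (A * P)) (hm : 0 < m) {b : EuclideanSpace ℝ (Fin n)}
    {q : EuclideanSpace ℝ (Fin n) → EuclideanSpace ℝ (Fin n)}
    (hq : ∀ y, q y = y + mulV P (b - mulV A y)) {x z : ℕ → EuclideanSpace ℝ (Fin n)}
    {γ : ℕ → ℝ} (hstep : x (k + 1) = ngmresCombination m k (q (x k)) x γ)
    (hopt : ∀ c, ‖mulV A (x (k + 1)) - b‖ ≤ ‖mulV A (ngmresCombination m k (q (x k)) x c) - b‖)
    (hG : ∀ j, IsGMRESIterate (A * P) (mulV A (x 0) - b) j (z j))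
    (hnew : 0 < k → z k ∉ Krylov (A * P) (mulV A (x 0) - b) (k - 1))
    (hx : ∀ j ≤ k, x j = x 0 + mulV P (z j)) :
    x (k + 1) = x 0 + mulV P (z (k + 1)) := by
  set v := mulV A (x 0) - b
  set y := z k - (v + mulV (A * P) (z k))
  have hqk : q (x k) = x 0 + mulV P y := by
    rw [hq, hx k le_rfl, ← neg_sub, mulV_add_mulV_sub, mulV_neg, mulV_sub_s10]
    abel
  have hcomb : ∀ c, ngmresCombination m k (q (x k)) x c =
      x 0 + mulV P (ngmresCombination m k y z c) := fun c => by
    rw [hqk]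
    exact ngmresCombination_affine (toEuclideanLin P) (x 0) y c hx
  have hζ : ngmresCombination m k y z γ ∈ Krylov (A * P) v (k + 1) :=
    ngmresCombination_mem _ γ
      (sub_mem (Krylov_mono k.le_succ (hG k).1) (residual_mem_Krylov_succ (hG k).1))
      fun j hj => Krylov_mono (by omega) (hG j).1
  have hres := ngmres_residual_eq_gmres hM hm hG hnew hζ fun c => by
    simpa only [hstep, hcomb, mulV_add_mulV_sub] using hopt c
  rw [add_right_inj, ← mulV_mulV, ← mulV_mulV] at hres
  rw [hstep, hcomb, mulV_injective hA hres]

end Equivalence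

open Matrix in
theorem stmt_10_general {n : ℕ} (A P : Matrix (Fin n) (Fin n) ℝ)
    (hA : IsUnit A.det)
    (hsym : (A * P)ᵀ = A * P ∨
      ∃ (τ : ℝ) (S : Matrix (Fin n) (Fin n) ℝ), Sᵀ = -S ∧ A * P = τ • (1 : Matrix (Fin n) (Fin n) ℝ) + S)
    (b : EuclideanSpace ℝ (Fin n))
    (q : EuclideanSpace ℝ (Fin n) → EuclideanSpace ℝ (Fin n))
    (hq : ∀ y, q y = y + mulV P (b - mulV A y))
    (m : ℕ) (hm : 0 < m)
    (x xG : ℕ → EuclideanSpace ℝ (Fin n))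
    (rb0 : EuclideanSpace ℝ (Fin n)) (hrb0 : rb0 = mulV A (x 0) - b)
    -- NGMRES(m) sequence
    (β : ℕ → ℕ → ℝ)
    (hstep : ∀ k, x (k + 1) =
      q (x k) + ∑ i ∈ Finset.range (min k m + 1), β k i • (q (x k) - x (k - i)))
    (hopt : ∀ k, ∀ c : ℕ → ℝ,
      ‖mulV A (x (k + 1)) - b‖ ≤
      ‖mulV A (q (x k) + ∑ i ∈ Finset.range (min k m + 1), c i • (q (x k) - x (k - i))) - b‖)
    -- right-preconditioned GMRES sequence
    (hGmem : ∀ k, ∃ z ∈ Krylov (A * P) rb0 k, xG k = x 0 + mulV P z)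
    (hGopt : ∀ k, ∀ z ∈ Krylov (A * P) rb0 k,
      ‖mulV A (xG k) - b‖ ≤ ‖mulV A (x 0 + mulV P z) - b‖)
    (kstar : ℕ)
    (hdec : ∀ k, 0 < k → k < kstar →
      ‖mulV A (xG k) - b‖ < ‖mulV A (xG (k - 1)) - b‖) :
    ∀ k ≤ kstar, x k = xG k := by
  subst hrb0
  obtain ⟨a, c, hM⟩ := exists_transpose_eq_smul_one_add_smul hsym
  choose z hzK hxz using hGmem
  have hG : ∀ k, IsGMRESIterate (A * P) (mulV A (x 0) - b) k (z k) := fun k =>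
    ⟨hzK k, fun w hw => by simpa only [hxz, mulV_add_mulV_sub] using hGopt k w hw⟩
  have hnew : ∀ k, 0 < k → k < kstar → z k ∉ Krylov (A * P) (mulV A (x 0) - b) (k - 1) :=
    fun k hk hks hmem => (hdec k hk hks).not_ge <| by
      simpa only [hxz, mulV_add_mulV_sub] using (hG (k - 1)).2 _ hmem
  have hcoord : ∀ k ≤ kstar, x k = x 0 + mulV P (z k) := by
    intro k
    induction k using Nat.strong_induction_on with
    | _ k ih =>
      rcases k with _ | k
      · simp [mem_Krylov_zero.1 (hG 0).1, mulV]
      · exact fun hk => ngmres_succ_eq_gmres hA hM hm hq (hstep k) (hopt k) hG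
          (hnew k · (by omega)) fun j hj => ih j (by omega) (by omega)
  intro k hk
  rw [hcoord k hk, hxz]

open Matrix in
/-- windowed NGMRES(m) equals right-preconditioned GMRES when AP is
symmetric or a real shift of a skew-symmetric matrix. -/
theorem stmt_10 {n : ℕ} (A P : Matrix (Fin n) (Fin n) ℝ)
    (hA : IsUnit A.det) (hP : IsUnit P.det)
    (hsym : (A * P)ᵀ = A * P ∨
      ∃ (τ : ℝ) (S : Matrix (Fin n) (Fin n) ℝ), Sᵀ = -S ∧ A * P = τ • (1 : Matrix (Fin n) (Fin n) ℝ) + S)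
    (b : EuclideanSpace ℝ (Fin n))
    (q : EuclideanSpace ℝ (Fin n) → EuclideanSpace ℝ (Fin n))
    (hq : ∀ y, q y = y + mulV P (b - mulV A y))
    (m : ℕ) (hm : 0 < m)
    (x xG : ℕ → EuclideanSpace ℝ (Fin n))
    (rb0 : EuclideanSpace ℝ (Fin n)) (hrb0 : rb0 = mulV A (x 0) - b)
    -- NGMRES(m) sequence
    (β : ℕ → ℕ → ℝ)
    (hstep : ∀ k, x (k + 1) =
      q (x k) + ∑ i ∈ Finset.range (min k m + 1), β k i • (q (x k) - x (k - i)))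
    (hopt : ∀ k, ∀ c : ℕ → ℝ,
      ‖mulV A (x (k + 1)) - b‖ ≤
      ‖mulV A (q (x k) + ∑ i ∈ Finset.range (min k m + 1), c i • (q (x k) - x (k - i))) - b‖)
    -- right-preconditioned GMRES sequence
    (hG0 : xG 0 = x 0)
    (hGmem : ∀ k, ∃ z ∈ Krylov (A * P) rb0 k, xG k = x 0 + mulV P z)
    (hGopt : ∀ k, ∀ z ∈ Krylov (A * P) rb0 k,
      ‖mulV A (xG k) - b‖ ≤ ‖mulV A (x 0 + mulV P z) - b‖)
    (kstar : ℕ) (hkstar : 0 < kstar)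
    (hne : mulV A (xG (kstar - 1)) - b ≠ 0)
    (hdec : ∀ k, 0 < k → k < kstar →
      ‖mulV A (xG k) - b‖ < ‖mulV A (xG (k - 1)) - b‖) :
    ∀ k ≤ kstar, x k = xG k :=
  stmt_10_general A P hA hsym b q hq m hm x xG rb0 hrb0 β hstep hopt hGmem hGopt kstar hdec
end

section
/- Let α ∈ ℝ^{m_k} minimize ‖(A q(x_k) − b) + Σ_{i=1}^{m_k} α_i ((A q(x_k) − b) − (A q(x_{k−i}) − b))‖ over all α ∈ ℝ^{m_k} (the AAg least-squares problem), define x_{k+1} = q(x_k) + Σ_{i=1}^{m_k} α_i (q(x_k) − q(x_{k−i})) and r̄_{k+1} = A x_{k+1} − b. Then ⟨r̄_{k+1}, H (r̄_{k−j} − r̄_{k−i})⟩ = 0 for all indices 0 ≤ i, j ≤ m_k, and ‖r̄_{k+1}‖ ≤ ‖H r̄_k‖, where H = I − A P. -/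
/-!
A Richardson step multiplies the residual by `H`: `A q(x) - b = H r̄(x)`, so with `fᵢ = H r̄_{k-i}` the AAg problem
minimises `‖f₀ + ∑ αᵢ (f₀ - fᵢ)‖` over `α`, and by linearity of `A` its minimal value is `‖r̄_{k+1}‖`.
The residual of a least-squares minimiser is orthogonal to each direction `f₀ - fᵢ`, hence to every
difference `fⱼ - fᵢ`; comparing with `α = 0` gives `‖r̄_{k+1}‖ ≤ ‖f₀‖`.
-/

open scoped RealInnerProductSpace

section LeastSquares

variable {E : Type*} [NormedAddCommGroup E] [InnerProductSpace ℝ E]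

theorem real_inner_eq_zero_of_forall_norm_le_norm_add_smul {v u : E}
    (h : ∀ t : ℝ, ‖v‖ ≤ ‖v + t • u‖) : ⟪v, u⟫ = 0 := by
  have hquad : ∀ t : ℝ, 0 ≤ 2 * t * ⟪v, u⟫ + t ^ 2 * ‖u‖ ^ 2 := fun t => by
    have hsq := pow_le_pow_left₀ (norm_nonneg v) (h t) 2
    rw [norm_add_sq_real, real_inner_smul_right, norm_smul, mul_pow, Real.norm_eq_abs,
      sq_abs] at hsq
    linarith
  -- this step size makes the quadratic equal to `-⟪v, u⟫² (‖u‖² + 2) / (‖u‖² + 1)²`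
  have hstep := hquad (-⟪v, u⟫ / (‖u‖ ^ 2 + 1))
  field_simp at hstep
  nlinarith [sq_nonneg ⟪v, u⟫, sq_nonneg ‖u‖]

theorem real_inner_add_sum_smul_eq_zero_of_forall_norm_le {ι : Type*} {s : Finset ι} {v : E}
    {w : ι → E} {α : ι → ℝ}
    (hmin : ∀ a : ι → ℝ, ‖v + ∑ j ∈ s, α j • w j‖ ≤ ‖v + ∑ j ∈ s, a j • w j‖)
    {i : ι} (hi : i ∈ s) : ⟪v + ∑ j ∈ s, α j • w j, w i⟫ = 0 := by
  classical
  refine real_inner_eq_zero_of_forall_norm_le_norm_add_smul fun t => ?_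
  convert hmin (α + Pi.single i t) using 2
  simp [add_smul, Finset.sum_add_distrib, Pi.single_apply, ite_smul, hi, add_assoc]

end LeastSquares

theorem mulV_richardson_sub {n : ℕ} (A P : Matrix (Fin n) (Fin n) ℝ)
    (b y : EuclideanSpace ℝ (Fin n)) :
    mulV A (y + mulV P (b - mulV A y)) - b = mulV (1 - A * P) (mulV A y - b) := by
  simp only [mulV, map_add, map_sub, Matrix.toLpLin_one, Matrix.toLpLin_mul_same,
    LinearMap.sub_apply, LinearMap.id_apply, LinearMap.comp_apply]
  abel

theorem mulV_add_sum_smul_sub_sub {n : ℕ} (M : Matrix (Fin n) (Fin n) ℝ) {ι : Type*}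
    (s : Finset ι) (α : ι → ℝ) (b y₀ : EuclideanSpace ℝ (Fin n))
    (y : ι → EuclideanSpace ℝ (Fin n)) :
    mulV M (y₀ + ∑ i ∈ s, α i • (y₀ - y i)) - b =
      (mulV M y₀ - b) + ∑ i ∈ s, α i • ((mulV M y₀ - b) - (mulV M (y i) - b)) := by
  simp only [mulV, map_add, map_sum, map_smul, map_sub, sub_sub_sub_cancel_right]
  abel

theorem stmt_12_general {n : ℕ} (A P : Matrix (Fin n) (Fin n) ℝ)
    (b : EuclideanSpace ℝ (Fin n))
    (q rb : EuclideanSpace ℝ (Fin n) → EuclideanSpace ℝ (Fin n))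
    (hq : ∀ y, q y = y + mulV P (b - mulV A y))
    (hrb : ∀ y, rb y = mulV A y - b)
    (H : Matrix (Fin n) (Fin n) ℝ) (hH : H = 1 - A * P)
    (k m : ℕ)
    (x : ℕ → EuclideanSpace ℝ (Fin n))
    (α : ℕ → ℝ)
    (hopt : ∀ a : ℕ → ℝ,
      ‖(mulV A (q (x k)) - b) + ∑ i ∈ Finset.Icc 1 m,
          α i • ((mulV A (q (x k)) - b) - (mulV A (q (x (k - i))) - b))‖ ≤
      ‖(mulV A (q (x k)) - b) + ∑ i ∈ Finset.Icc 1 m,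
          a i • ((mulV A (q (x k)) - b) - (mulV A (q (x (k - i))) - b))‖)
    (xk1 rk1 : EuclideanSpace ℝ (Fin n))
    (hx : xk1 = q (x k) + ∑ i ∈ Finset.Icc 1 m, α i • (q (x k) - q (x (k - i))))
    (hrk1 : rk1 = mulV A xk1 - b) :
    (∀ i j, i ≤ m → j ≤ m → ⟪rk1, mulV H (rb (x (k - j)) - rb (x (k - i)))⟫ = 0) ∧
    ‖rk1‖ ≤ ‖mulV H (rb (x k))‖ := by
  have hres : ∀ y, mulV A (q y) - b = mulV H (rb y) := fun y => by
    rw [hq, hrb, hH, mulV_richardson_sub]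
  set f : ℕ → EuclideanSpace ℝ (Fin n) := fun i => mulV A (q (x (k - i))) - b
  have hrk1f : rk1 = f 0 + ∑ i ∈ Finset.Icc 1 m, α i • (f 0 - f i) := by
    rw [hrk1, hx]
    exact mulV_add_sum_smul_sub_sub A _ α b _ _
  have horth : ∀ i ≤ m, ⟪rk1, f 0 - f i⟫ = 0 := by
    intro i hi
    rcases i.eq_zero_or_pos with rfl | hpos
    · rw [sub_self, inner_zero_right]
    · rw [hrk1f]
      exact real_inner_add_sum_smul_eq_zero_of_forall_norm_le hopt
        (Finset.mem_Icc.2 ⟨hpos, hi⟩)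
  refine ⟨fun i j hi hj => ?_, ?_⟩
  · have hdiff : mulV H (rb (x (k - j)) - rb (x (k - i))) = (f 0 - f i) - (f 0 - f j) := by
      rw [sub_sub_sub_cancel_left, mulV, map_sub]
      exact congrArg₂ _ (hres _).symm (hres _).symm
    rw [hdiff, inner_sub_right, horth i hi, horth j hj, sub_zero]
  · rw [← hres, hrk1f]
    refine (hopt 0).trans_eq ?_
    simp

/-- orthogonality and norm bound for the AAg residual. -/
theorem stmt_12 {n : ℕ} (A P : Matrix (Fin n) (Fin n) ℝ)
    (hA : IsUnit A.det) (hP : IsUnit P.det)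
    (b : EuclideanSpace ℝ (Fin n))
    (q rb : EuclideanSpace ℝ (Fin n) → EuclideanSpace ℝ (Fin n))
    (hq : ∀ y, q y = y + mulV P (b - mulV A y))
    (hrb : ∀ y, rb y = mulV A y - b)
    (H : Matrix (Fin n) (Fin n) ℝ) (hH : H = 1 - A * P)
    (k m : ℕ) (hm : m ≤ k)
    (x : ℕ → EuclideanSpace ℝ (Fin n))
    (α : ℕ → ℝ)
    (hopt : ∀ a : ℕ → ℝ,
      ‖(mulV A (q (x k)) - b) + ∑ i ∈ Finset.Icc 1 m,
          α i • ((mulV A (q (x k)) - b) - (mulV A (q (x (k - i))) - b))‖ ≤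
      ‖(mulV A (q (x k)) - b) + ∑ i ∈ Finset.Icc 1 m,
          a i • ((mulV A (q (x k)) - b) - (mulV A (q (x (k - i))) - b))‖)
    (xk1 rk1 : EuclideanSpace ℝ (Fin n))
    (hx : xk1 = q (x k) + ∑ i ∈ Finset.Icc 1 m, α i • (q (x k) - q (x (k - i))))
    (hrk1 : rk1 = mulV A xk1 - b) :
    (∀ i j, i ≤ m → j ≤ m → ⟪rk1, mulV H (rb (x (k - j)) - rb (x (k - i)))⟫ = 0) ∧
    ‖rk1‖ ≤ ‖mulV H (rb (x k))‖ :=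
  stmt_12_general A P b q rb hq hrb H hH k m x α hopt xk1 rk1 hx hrk1
end

section
/- For every coefficient vector α ∈ ℝ^{m_k}, the AA update x_{k+1} = q(x_k) + Σ_{i=1}^{m_k} α_i (q(x_k) − q(x_{k−i})) applied to the preconditioned Richardson iteration satisfies both: (1) r(q(x_k)) + Σ_{i=1}^{m_k} α_i (r(q(x_k)) − r(q(x_{k−i}))) = r(x_{k+1}) (so the AAr least-squares objective vector equals the preconditioned residual of the update), and (2) r(x_{k+1}) = B · (r_k − Σ_{i=1}^{m_k} α_i (r_{k−i} − r_k)), where r_j = r(x_j) and B = I − P A. -/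
open scoped RealInnerProductSpace

lemma mulV_neg_s14 {n : ℕ} (M : Matrix (Fin n) (Fin n) ℝ) (v : EuclideanSpace ℝ (Fin n)) :
    mulV M (-v) = -mulV M v := by simp [mulV]

/-- AAr least-squares objective equals the preconditioned residual of the AA update. -/
theorem stmt_14 {n : ℕ} (A P : Matrix (Fin n) (Fin n) ℝ)
    (hA : IsUnit A.det) (hP : IsUnit P.det)
    (b : EuclideanSpace ℝ (Fin n))
    (q r : EuclideanSpace ℝ (Fin n) → EuclideanSpace ℝ (Fin n))
    (hq : ∀ y, q y = y + mulV P (b - mulV A y))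
    (hr : ∀ y, r y = y - q y)
    (B : Matrix (Fin n) (Fin n) ℝ) (hB : B = 1 - P * A)
    (k m : ℕ) (hm : m ≤ k)
    (x : ℕ → EuclideanSpace ℝ (Fin n))
    (α : ℕ → ℝ)
    (xk1 : EuclideanSpace ℝ (Fin n))
    (hx : xk1 = q (x k) + ∑ i ∈ Finset.Icc 1 m, α i • (q (x k) - q (x (k - i)))) :
    r (q (x k)) + ∑ i ∈ Finset.Icc 1 m,
        α i • (r (q (x k)) - r (q (x (k - i)))) = r xk1 ∧
    r xk1 = mulV B (r (x k) - ∑ i ∈ Finset.Icc 1 m, α i • (r (x (k - i)) - r (x k))) := by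
  -- r y = PA y - P b
  have hr' : ∀ y, r y = mulV (P * A) y - mulV P b := by
    intro y
    rw [hr, hq, mulV_sub, mulV_mul]
    abel
  -- r u - r v = PA (u - v)
  have hdiff : ∀ u v, r u - r v = mulV (P * A) (u - v) := by
    intro u v; rw [hr', hr', mulV_sub]; abel
  -- r (q y) = B (r y)
  have hrq : ∀ y, r (q y) = mulV B (r y) := by
    intro y
    rw [hr' (q y), hq, hr' y, hB]
    simp only [mulV_sub_mat, mulV_one, mulV_sub, mulV_add, mulV_mul]
    abel
  -- r xk1 = r (q xk) + PA (∑ ...)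
  have h1 : r xk1 = r (q (x k)) +
      mulV (P * A) (∑ i ∈ Finset.Icc 1 m, α i • (q (x k) - q (x (k - i)))) := by
    have h0 := hdiff xk1 (q (x k))
    rw [hx] at h0 ⊢
    have h2 : q (x k) + ∑ i ∈ Finset.Icc 1 m, α i • (q (x k) - q (x (k - i))) - q (x k)
        = ∑ i ∈ Finset.Icc 1 m, α i • (q (x k) - q (x (k - i))) := by abel
    rw [h2] at h0
    linear_combination (norm := abel) h0
  constructor
  · rw [h1, mulV_sum]
    congr 1
    apply Finset.sum_congr rfl
    intro i _
    rw [mulV_smul, hdiff]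
  · have hL : ∀ i ∈ Finset.Icc 1 m,
        mulV (P * A) (α i • (q (x k) - q (x (k - i))))
          = -(α i • mulV B (r (x (k - i)) - r (x k))) := by
      intro i _
      rw [mulV_smul, ← hdiff, hrq, hrq, ← mulV_sub,
        ← neg_sub (r (x (k - i))) (r (x k)), mulV_neg_s14, smul_neg]
    have hR : ∀ i ∈ Finset.Icc 1 m,
        mulV B (α i • (r (x (k - i)) - r (x k)))
          = α i • mulV B (r (x (k - i)) - r (x k)) := by
      intro i _; rw [mulV_smul]
    rw [h1, hrq, mulV_sum, Finset.sum_congr rfl hL, mulV_sub, mulV_sum,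
      Finset.sum_congr rfl hR, Finset.sum_neg_distrib]
    abel
end

section
/- Assume the matrix PA satisfies (PA)ᵀ = PA, or PA = τ I + S for some τ ∈ ℝ and some matrix S with Sᵀ = −S. Fix a depth m ∈ ℤ^+ and x_0 ∈ ℝ^n, and let (x_k) be the NGMRESr(m) sequence: for each k, x_{k+1} = q(x_k) + Σ_{i=0}^{m_k} β_i^{(k)} (q(x_k) − x_{k−i}) with m_k = min{k, m}, where β^{(k)} ∈ ℝ^{m_k+1} minimizes ‖P(A x_{k+1} − b)‖ over all coefficient vectors. Let (x_k^{Gl}) be a left-preconditioned GMRES sequence with x_0^{Gl} = x_0: for each k, x_k^{Gl} ∈ x_0 + K_k(PA, r_0) and ‖P(A x_k^{Gl} − b)‖ ≤ ‖P(A y − b)‖ for every y ∈ x_0 + K_k(PA, r_0), where r_0 = P(A x_0 − b); write r_k^{Gl} = P(A x_k^{Gl} − b). Assume for some k* ∈ ℤ^+ that r_{k*−1}^{Gl} ≠ 0 and ‖r_k^{Gl}‖ < ‖r_{k−1}^{Gl}‖ for all integers k with 0 < k < k*. Then x_k = x_k^{Gl} for all 0 ≤ k ≤ k*. -/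
open scoped RealInnerProductSpace

/-!
Write `r_k = P(A x_k^{Gl} - b)` and `d_k = x_k^{Gl} - x_{k-1}^{Gl}`, and let `T = PA`. A GMRES
iterate is characterised by `r_k ⊥ T K_k`, and it is unique because `T` is injective. Both
hypotheses on `PA` say `Tᵀ = α + β T`, so `⟪T r_k, T w⟫ = α ⟪r_k, T w⟫ + β ⟪r_k, T² w⟫ = 0` for
`w ∈ K_{k-1}`; together with `T d_k = r_k - r_{k-1}` this makes `r_k + T v ⊥ T K_{k-1}` for every
`v ∈ span {r_k, d_k}`. Strict decrease of the residuals forces `d_k ∉ K_{k-1}`, hence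
`K_{k+1} = K_{k-1} + span {d_k, r_k}`, and orthogonality then puts the GMRES correction
`x_{k+1}^{Gl} - x_k^{Gl}` in `span {r_k, d_k}`. Since `q(x_k) - x_k = -r_k` and
`q(x_k) - x_{k-1} = d_k - r_k`, the NGMRES window (depth `m ≥ 1`) reaches this point, while every
NGMRES candidate lies in `x_0 + K_{k+1}`; so the NGMRES minimiser is the GMRES iterate.
-/

open Submodule Function

section Krylov

variable {R E : Type*} [Semiring R] [AddCommMonoid E] [Module R E]

def krylov (T : Module.End R E) (u : E) (k : ℕ) : Submodule R E :=
  span R (Set.range fun i : Fin k => (T ^ (i : ℕ)) u)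

variable (T : Module.End R E) (u : E)

theorem krylov_zero : krylov T u 0 = ⊥ := by
  simp [krylov]

theorem krylov_succ (k : ℕ) : krylov T u (k + 1) = krylov T u k ⊔ R ∙ (T ^ k) u := by
  rw [krylov, krylov, sup_comm, ← span_insert, ← Fin.range_snoc]
  congr 2
  ext i
  refine Fin.lastCases ?_ (fun j => ?_) i <;> simp

theorem krylov_succ_eq_span_sup_map (k : ℕ) :
    krylov T u (k + 1) = R ∙ u ⊔ (krylov T u k).map T := by
  rw [krylov, krylov, ← span_image, ← span_insert, Fin.range_fin_succ, ← Set.range_comp]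
  congr 3
  ext i
  simp [Fin.tail, pow_succ']

theorem krylov_mono : Monotone (krylov T u) :=
  monotone_nat_of_le_succ fun k => krylov_succ T u k ▸ le_sup_left

variable {T u}

theorem add_apply_mem_krylov_succ {k : ℕ} {z : E} (hz : z ∈ krylov T u k) :
    u + T z ∈ krylov T u (k + 1) := by
  rw [krylov_succ_eq_span_sup_map]
  exact add_mem (mem_sup_left (mem_span_singleton_self u)) (mem_sup_right (mem_map_of_mem hz))

theorem apply_mem_krylov_succ {k : ℕ} {z : E} (hz : z ∈ krylov T u k) :
    T z ∈ krylov T u (k + 1) := by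
  rw [krylov_succ_eq_span_sup_map]
  exact mem_sup_right (mem_map_of_mem hz)

end Krylov

theorem krylov_succ_le_sup_of_notMem {K V : Type*} [DivisionRing K] [AddCommGroup V] [Module K V]
    {T : Module.End K V} {u d : V} {k : ℕ} (hd : d ∈ krylov T u (k + 1))
    (hdk : d ∉ krylov T u k) : krylov T u (k + 1) ≤ krylov T u k ⊔ K ∙ d := by
  rw [krylov_succ] at hd ⊢
  have hexch : (T ^ k) u ∈ span K (insert d (krylov T u k : Set V)) :=
    mem_span_insert_exchange (by rwa [span_insert, span_eq, sup_comm]) (by rwa [span_eq])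
  rw [span_insert, span_eq, sup_comm] at hexch
  exact sup_le le_sup_left ((span_singleton_le_iff_mem _ _).2 hexch)

section Residual

variable {E : Type*} [NormedAddCommGroup E] [InnerProductSpace ℝ E]

def IsMinResidual (T : E →ₗ[ℝ] E) (u : E) (W : Submodule ℝ E) (z : E) : Prop :=
  z ∈ W ∧ ∀ w ∈ W, ‖u + T z‖ ≤ ‖u + T w‖

variable {T : E →ₗ[ℝ] E} {u z : E} {W : Submodule ℝ E}

theorem IsMinResidual.inner_eq_zero (h : IsMinResidual T u W z) {w : E} (hw : w ∈ W) :
    ⟪u + T z, T w⟫ = 0 := by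
  have hTz : -T z ∈ W.map T := ⟨-z, W.neg_mem h.1, map_neg T z⟩
  have hmin : ‖u - -T z‖ = ⨅ y : (W.map T : Set E), ‖u - y‖ := by
    refine le_antisymm (le_ciInf ?_) ?_
    · rintro ⟨_, w', hw', rfl⟩
      simpa [sub_eq_add_neg] using h.2 (-w') (W.neg_mem hw')
    · have hbdd : BddBelow (Set.range fun y : (W.map T : Set E) => ‖u - y‖) :=
        ⟨0, by rintro _ ⟨y, rfl⟩; exact norm_nonneg _⟩
      exact ciInf_le hbdd ⟨-T z, hTz⟩
  simpa using (norm_eq_iInf_iff_real_inner_eq_zero _ hTz).1 hmin (T w) (mem_map_of_mem hw)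

theorem IsMinResidual.eq_of_norm_le (hT : Injective T) (h : IsMinResidual T u W z) {z' : E}
    (hz' : z' ∈ W) (hle : ‖u + T z'‖ ≤ ‖u + T z‖) : z' = z := by
  have hsplit : u + T z' = (u + T z) + T (z' - z) := by rw [map_sub]; abel
  have hpyth := norm_add_sq_eq_norm_sq_add_norm_sq_real (h.inner_eq_zero (W.sub_mem hz' h.1))
  rw [← hsplit] at hpyth
  have hT0 : T (z' - z) = 0 := by
    rw [← norm_eq_zero]
    nlinarith [norm_nonneg (u + T z'), norm_nonneg (u + T z), norm_nonneg (T (z' - z))]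
  exact sub_eq_zero.1 ((injective_iff_map_eq_zero T).1 hT _ hT0)

end Residual

section GMRES

variable {E : Type*} [NormedAddCommGroup E] [InnerProductSpace ℝ E]
  {T : E →ₗ[ℝ] E} {u : E} {z : ℕ → E}

theorem sub_notMem_krylov_of_norm_lt (hz : ∀ k, IsMinResidual T u (krylov T u k) (z k)) {k : ℕ}
    (hlt : ‖u + T (z (k + 1))‖ < ‖u + T (z k)‖) : z (k + 1) - z k ∉ krylov T u k := by
  intro hd
  have hmem : z (k + 1) ∈ krylov T u k := by simpa using add_mem hd (hz k).1
  exact (not_lt.2 ((hz k).2 _ hmem)) hlt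

theorem krylov_succ_succ_le (hz : ∀ k, z k ∈ krylov T u k) {k : ℕ}
    (hd : z (k + 1) - z k ∉ krylov T u k) :
    krylov T u (k + 2) ≤ krylov T u k ⊔ span ℝ {u + T (z (k + 1)), z (k + 1) - z k} := by
  set S := krylov T u k ⊔ span ℝ {u + T (z (k + 1)), z (k + 1) - z k}
  have hrS : u + T (z (k + 1)) ∈ S := mem_sup_right (subset_span (by simp))
  have hdS : z (k + 1) - z k ∈ S := mem_sup_right (subset_span (by simp))
  have hK : krylov T u (k + 1) ≤ krylov T u k ⊔ ℝ ∙ (z (k + 1) - z k) :=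
    krylov_succ_le_sup_of_notMem (sub_mem (hz (k + 1)) (krylov_mono T u k.le_succ (hz k))) hd
  have hKS : krylov T u (k + 1) ≤ S :=
    hK.trans (sup_le le_sup_left ((span_singleton_le_iff_mem _ _).2 hdS))
  have hTd : T (z (k + 1) - z k) ∈ S := by
    rw [show T (z (k + 1) - z k) = (u + T (z (k + 1))) - (u + T (z k)) by rw [map_sub]; abel]
    exact sub_mem hrS (hKS (add_apply_mem_krylov_succ (hz k)))
  rw [krylov_succ_eq_span_sup_map]
  refine sup_le ((span_singleton_le_iff_mem _ _).2 (hKS ?_)) (map_le_iff_le_comap.2 ?_)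
  · simpa using add_apply_mem_krylov_succ (T := T) (u := u) (zero_mem (krylov T u k))
  · refine hK.trans (sup_le ?_ ((span_singleton_le_iff_mem _ _).2 hTd))
    exact fun w hw => hKS (apply_mem_krylov_succ hw)

theorem inner_add_apply_eq_zero_of_mem_span {α β : ℝ}
    (hsym : ∀ v w, ⟪T v, w⟫ = α * ⟪v, w⟫ + β * ⟪v, T w⟫)
    (hz : ∀ k, IsMinResidual T u (krylov T u k) (z k)) {k : ℕ} {v w : E}
    (hv : v ∈ span ℝ {u + T (z (k + 1)), z (k + 1) - z k}) (hw : w ∈ krylov T u k) :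
    ⟪u + T (z (k + 1)) + T v, T w⟫ = 0 := by
  have hwk : w ∈ krylov T u (k + 1) := krylov_mono T u k.le_succ hw
  have hr : ⟪u + T (z (k + 1)), T w⟫ = 0 := (hz (k + 1)).inner_eq_zero hwk
  have hTr : ⟪T (u + T (z (k + 1))), T w⟫ = 0 := by
    rw [hsym, hr, (hz (k + 1)).inner_eq_zero (apply_mem_krylov_succ hw)]
    ring
  have hTd : ⟪T (z (k + 1) - z k), T w⟫ = 0 := by
    rw [show T (z (k + 1) - z k) = (u + T (z (k + 1))) - (u + T (z k)) by rw [map_sub]; abel,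
      inner_sub_left, hr, (hz k).inner_eq_zero hw, sub_zero]
  set r := u + T (z (k + 1))
  obtain ⟨a, b, rfl⟩ := mem_span_pair.1 hv
  simp only [map_add, map_smul, inner_add_left, real_inner_smul_left, hr, hTr, hTd]
  ring

theorem gmres_succ_succ_sub_mem_span (hT : Injective T) {α β : ℝ}
    (hsym : ∀ v w, ⟪T v, w⟫ = α * ⟪v, w⟫ + β * ⟪v, T w⟫)
    (hz : ∀ k, IsMinResidual T u (krylov T u k) (z k)) {k : ℕ}
    (hd : z (k + 1) - z k ∉ krylov T u k) :
    z (k + 2) - z (k + 1) ∈ span ℝ {u + T (z (k + 1)), z (k + 1) - z k} := by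
  have hmem : z (k + 2) - z (k + 1) ∈ krylov T u (k + 2) :=
    sub_mem (hz (k + 2)).1 (krylov_mono T u (k + 1).le_succ (hz (k + 1)).1)
  obtain ⟨w, hw, v, hv, hwv⟩ := mem_sup.1 (krylov_succ_succ_le (fun j => (hz j).1) hd hmem)
  -- the new residual is `(u + T z_{k+1} + T v) + T w`, both summands orthogonal to `T w`
  have hTw : ⟪T w, T w⟫ = 0 := by
    have hnew := (hz (k + 2)).inner_eq_zero (krylov_mono T u (by omega) hw)
    rw [show u + T (z (k + 2)) = u + T (z (k + 1)) + T v + T w by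
      rw [← add_sub_cancel (z (k + 1)) (z (k + 2)), ← hwv]; simp only [map_add]; abel,
      inner_add_left, inner_add_apply_eq_zero_of_mem_span hsym hz hv hw, zero_add] at hnew
    exact hnew
  have hw0 : w = 0 := (injective_iff_map_eq_zero T).1 hT _ (inner_self_eq_zero.1 hTw)
  rwa [← hwv, hw0, zero_add]

theorem gmres_succ_sub_mem_span (hT : Injective T) {α β : ℝ}
    (hsym : ∀ v w, ⟪T v, w⟫ = α * ⟪v, w⟫ + β * ⟪v, T w⟫)
    (hz : ∀ k, IsMinResidual T u (krylov T u k) (z k)) (k : ℕ)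
    (hdec : 0 < k → ‖u + T (z k)‖ < ‖u + T (z (k - 1))‖) :
    z (k + 1) - z k ∈ span ℝ {u + T (z k), z k - z (k - 1)} := by
  cases k with
  | zero =>
    have hz0 : z 0 = 0 := by simpa [krylov_zero] using (hz 0).1
    have hz1 : z 1 ∈ ℝ ∙ u := by simpa [krylov_succ, krylov_zero] using (hz 1).1
    simpa [hz0] using span_mono (by simp) hz1
  | succ k =>
    exact gmres_succ_succ_sub_mem_span hT hsym hz
      (sub_notMem_krylov_of_norm_lt hz (hdec k.succ_pos))

end GMRES

section NGMRES

variable {E : Type*} [NormedAddCommGroup E] [InnerProductSpace ℝ E]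
  (T : E →ₗ[ℝ] E) (c : E) (m : ℕ) (x : ℕ → E)

/-- The paper's `q`, with `T = PA` and `c = Pb`. -/
def richardson (y : E) : E :=
  y - (T y - c)

def ngmresUpdate (k : ℕ) (γ : ℕ → ℝ) : E :=
  richardson T c (x k) +
    ∑ i ∈ Finset.range (min k m + 1), γ i • (richardson T c (x k) - x (k - i))

variable {T c m x}

theorem ngmresUpdate_sub_mem_krylov {k : ℕ}
    (hx : ∀ j ≤ k, x j - x 0 ∈ krylov T (T (x 0) - c) k) (γ : ℕ → ℝ) :
    ngmresUpdate T c m x k γ - x 0 ∈ krylov T (T (x 0) - c) (k + 1) := by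
  have hK := krylov_mono T (T (x 0) - c) k.le_succ
  have hq : ∀ j ≤ k, richardson T c (x k) - x j ∈ krylov T (T (x 0) - c) (k + 1) := by
    intro j hj
    have hres := add_apply_mem_krylov_succ (hx k le_rfl)
    rw [show richardson T c (x k) - x j =
        (x k - x 0) - (x j - x 0) - (T (x 0) - c + T (x k - x 0)) by
      rw [richardson, map_sub]; abel]
    exact sub_mem (sub_mem (hK (hx k le_rfl)) (hK (hx j hj))) hres
  rw [ngmresUpdate, add_sub_right_comm]
  exact add_mem (hq 0 k.zero_le)
    (sum_mem fun i _ => smul_mem _ _ (hq (k - i) (Nat.sub_le k i)))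

theorem exists_ngmresUpdate_eq (hm : 0 < m) (k : ℕ) (a b : ℝ) :
    ∃ γ, ngmresUpdate T c m x k γ = x k + a • (T (x k) - c) + b • (x k - x (k - 1)) := by
  cases k with
  | zero =>
    refine ⟨fun _ => -1 - a, ?_⟩
    simp only [ngmresUpdate, richardson, Nat.zero_min, zero_add, Finset.sum_range_one,
      Nat.sub_zero, sub_self, smul_zero, add_zero]
    module
  | succ k =>
    refine ⟨fun i => if i = 0 then -1 - a - b else if i = 1 then b else 0, ?_⟩
    have hwindow : Finset.range 2 ⊆ Finset.range (min (k + 1) m + 1) :=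
      Finset.range_subset_range.2 (by omega)
    rw [ngmresUpdate, ← Finset.sum_subset hwindow fun i _ hi => by
      simp [show i ≠ 0 by simp at hi; omega, show i ≠ 1 by simp at hi; omega]]
    simp only [richardson, Finset.sum_range_succ, Finset.range_one, Finset.sum_singleton,
      ↓reduceIte, one_ne_zero, tsub_zero, add_tsub_cancel_right, sub_sub_cancel_left, neg_sub]
    module

end NGMRES

theorem ngmres_eq_gmres {E : Type*} [NormedAddCommGroup E] [InnerProductSpace ℝ E]
    {T : E →ₗ[ℝ] E} (hT : Injective T) {α β' : ℝ}
    (hsym : ∀ v w, ⟪T v, w⟫ = α * ⟪v, w⟫ + β' * ⟪v, T w⟫) {c : E} {m : ℕ} (hm : 0 < m)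
    {x : ℕ → E} {β : ℕ → ℕ → ℝ} (hstep : ∀ k, x (k + 1) = ngmresUpdate T c m x k (β k))
    (hopt : ∀ k γ, ‖T (x (k + 1)) - c‖ ≤ ‖T (ngmresUpdate T c m x k γ) - c‖)
    {u : E} (hu : u = T (x 0) - c) {z : ℕ → E} (hz : ∀ k, IsMinResidual T u (krylov T u k) (z k))
    {kstar : ℕ} (hdec : ∀ k, 0 < k → k < kstar → ‖u + T (z k)‖ < ‖u + T (z (k - 1))‖) :
    ∀ k ≤ kstar, x k = x 0 + z k := by
  subst hu
  have hres : ∀ y, T y - c = T (x 0) - c + T (y - x 0) := fun y => by rw [map_sub]; abel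
  intro k hk
  induction k using Nat.strong_induction_on with
  | _ k ih =>
    rcases k with _ | k
    · simpa [krylov_zero] using (hz 0).1
    have IH : ∀ j ≤ k, x j = x 0 + z j := fun j hj => ih j (by omega) (by omega)
    obtain ⟨a, b, hab⟩ := mem_span_pair.1 <|
      gmres_succ_sub_mem_span hT hsym hz k fun hk0 => hdec k hk0 (by omega)
    obtain ⟨γ, hγ⟩ := exists_ngmresUpdate_eq (T := T) (c := c) (x := x) hm k a b
    have hgmres : ngmresUpdate T c m x k γ = x 0 + z (k + 1) := by
      rw [hγ, hres, IH k le_rfl, IH (k - 1) (Nat.sub_le k 1), add_sub_cancel_left,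
        add_sub_add_left_eq_sub, add_assoc (x 0 + z k), hab]
      abel
    have hmem : x (k + 1) - x 0 ∈ krylov T (T (x 0) - c) (k + 1) := by
      rw [hstep k]
      refine ngmresUpdate_sub_mem_krylov (fun j hj => ?_) _
      rw [IH j hj, add_sub_cancel_left]
      exact krylov_mono T _ hj (hz j).1
    have hle := hopt k γ
    rw [hgmres, hres, hres (x 0 + _), add_sub_cancel_left] at hle
    exact eq_add_of_sub_eq' ((hz (k + 1)).eq_of_norm_le hT hmem hle)

namespace Matrix

theorem transpose_eq_of_eq_smul_one_add {ι R : Type*} [DecidableEq ι] [CommRing R]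
    {M S : Matrix ι ι R} {τ : R} (hS : Sᵀ = -S) (hM : M = τ • 1 + S) :
    Mᵀ = (2 * τ) • 1 + (-1 : R) • M := by
  rw [hM, transpose_add, transpose_smul, transpose_one, hS]
  module

variable {ι : Type*} [Fintype ι] [DecidableEq ι]

theorem injective_toEuclideanLin {𝕜 : Type*} [RCLike 𝕜] {M : Matrix ι ι 𝕜}
    (hM : IsUnit M.det) : Injective (toEuclideanLin M) := fun _ _ h =>
  WithLp.ofLp_injective 2 <| mulVec_injective_iff_isUnit.2 ((isUnit_iff_isUnit_det M).2 hM) <|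
    congrArg WithLp.ofLp h

theorem inner_toEuclideanLin_eq_of_transpose_eq {M : Matrix ι ι ℝ} {α β : ℝ}
    (hM : Mᵀ = α • 1 + β • M) (v w : EuclideanSpace ℝ ι) :
    ⟪toEuclideanLin M v, w⟫ = α * ⟪v, w⟫ + β * ⟪v, toEuclideanLin M w⟫ := by
  rw [← LinearMap.adjoint_inner_right, ← toEuclideanLin_conjTranspose_eq_adjoint,
    conjTranspose_eq_transpose_of_trivial, hM]
  simp [inner_add_right, real_inner_smul_right]

end Matrix

open Matrix in
theorem stmt_19_general {n : ℕ} (A P : Matrix (Fin n) (Fin n) ℝ)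
    (hA : IsUnit A.det) (hP : IsUnit P.det)
    (hsym : (P * A)ᵀ = P * A ∨
      ∃ (τ : ℝ) (S : Matrix (Fin n) (Fin n) ℝ), Sᵀ = -S ∧ P * A = τ • (1 : Matrix (Fin n) (Fin n) ℝ) + S)
    (b : EuclideanSpace ℝ (Fin n))
    (q : EuclideanSpace ℝ (Fin n) → EuclideanSpace ℝ (Fin n))
    (hq : ∀ y, q y = y + mulV P (b - mulV A y))
    (m : ℕ) (hm : 0 < m)
    (x xG : ℕ → EuclideanSpace ℝ (Fin n))
    (r0 : EuclideanSpace ℝ (Fin n)) (hr0 : r0 = mulV P (mulV A (x 0) - b))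
    -- NGMRESr(m) sequence
    (β : ℕ → ℕ → ℝ)
    (hstep : ∀ k, x (k + 1) =
      q (x k) + ∑ i ∈ Finset.range (min k m + 1), β k i • (q (x k) - x (k - i)))
    (hopt : ∀ k, ∀ c : ℕ → ℝ,
      ‖mulV P (mulV A (x (k + 1)) - b)‖ ≤
      ‖mulV P (mulV A (q (x k) +
          ∑ i ∈ Finset.range (min k m + 1), c i • (q (x k) - x (k - i))) - b)‖)
    -- left-preconditioned GMRES sequence
    (hGmem : ∀ k, ∃ z ∈ Krylov (P * A) r0 k, xG k = x 0 + z)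
    (hGopt : ∀ k, ∀ z ∈ Krylov (P * A) r0 k,
      ‖mulV P (mulV A (xG k) - b)‖ ≤ ‖mulV P (mulV A (x 0 + z) - b)‖)
    (kstar : ℕ)
    (hdec : ∀ k, 0 < k → k < kstar →
      ‖mulV P (mulV A (xG k) - b)‖ < ‖mulV P (mulV A (xG (k - 1)) - b)‖) :
    ∀ k ≤ kstar, x k = xG k := by
  set T := toEuclideanLin (P * A)
  have hres : ∀ y, mulV P (mulV A y - b) = T y - mulV P b := fun y => by
    simp [T, mulV]
  have hK : ∀ k, Krylov (P * A) r0 k = krylov T r0 k := fun k => by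
    simp [Krylov, krylov, mulV, T]
  obtain ⟨α, β', hPAt⟩ : ∃ α β' : ℝ, (P * A)ᵀ = α • 1 + β' • (P * A) := by
    rcases hsym with h | ⟨τ, S, hS, hPA⟩
    exacts [⟨0, 1, by simp [h]⟩, ⟨_, _, transpose_eq_of_eq_smul_one_add hS hPA⟩]
  choose z hzK hxG using hGmem
  have hz : ∀ k, IsMinResidual T r0 (krylov T r0 k) (z k) := fun k =>
    ⟨hK k ▸ hzK k, fun w hw => by
      simpa [hres, hxG, hr0, add_sub_right_comm] using hGopt k w ((hK k).symm ▸ hw)⟩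
  have hqT : q = richardson T (mulV P b) := funext fun y => by
    rw [hq, richardson, ← neg_sub, ← hres]
    simp [mulV, sub_eq_add_neg]
  subst hqT
  intro k hk
  rw [hxG k]
  refine ngmres_eq_gmres (injective_toEuclideanLin (by rw [det_mul]; exact hP.mul hA))
    (inner_toEuclideanLin_eq_of_transpose_eq hPAt) hm hstep (fun k γ => ?_) (hr0.trans (hres _))
    hz (fun k h0 hk => ?_) k hk
  · have h := hopt k γ
    rwa [hres, hres] at h
  · simpa only [hres, hxG, map_add, add_sub_right_comm, ← hr0.trans (hres _)] using hdec k h0 hk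

open Matrix in
/-- windowed NGMRESr(m) equals left-preconditioned GMRES when PA is
symmetric or a real shift of a skew-symmetric matrix. -/
theorem stmt_19 {n : ℕ} (A P : Matrix (Fin n) (Fin n) ℝ)
    (hA : IsUnit A.det) (hP : IsUnit P.det)
    (hsym : (P * A)ᵀ = P * A ∨
      ∃ (τ : ℝ) (S : Matrix (Fin n) (Fin n) ℝ), Sᵀ = -S ∧ P * A = τ • (1 : Matrix (Fin n) (Fin n) ℝ) + S)
    (b : EuclideanSpace ℝ (Fin n))
    (q : EuclideanSpace ℝ (Fin n) → EuclideanSpace ℝ (Fin n))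
    (hq : ∀ y, q y = y + mulV P (b - mulV A y))
    (m : ℕ) (hm : 0 < m)
    (x xG : ℕ → EuclideanSpace ℝ (Fin n))
    (r0 : EuclideanSpace ℝ (Fin n)) (hr0 : r0 = mulV P (mulV A (x 0) - b))
    -- NGMRESr(m) sequence
    (β : ℕ → ℕ → ℝ)
    (hstep : ∀ k, x (k + 1) =
      q (x k) + ∑ i ∈ Finset.range (min k m + 1), β k i • (q (x k) - x (k - i)))
    (hopt : ∀ k, ∀ c : ℕ → ℝ,
      ‖mulV P (mulV A (x (k + 1)) - b)‖ ≤
      ‖mulV P (mulV A (q (x k) +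
          ∑ i ∈ Finset.range (min k m + 1), c i • (q (x k) - x (k - i))) - b)‖)
    -- left-preconditioned GMRES sequence
    (hG0 : xG 0 = x 0)
    (hGmem : ∀ k, ∃ z ∈ Krylov (P * A) r0 k, xG k = x 0 + z)
    (hGopt : ∀ k, ∀ z ∈ Krylov (P * A) r0 k,
      ‖mulV P (mulV A (xG k) - b)‖ ≤ ‖mulV P (mulV A (x 0 + z) - b)‖)
    (kstar : ℕ) (hkstar : 0 < kstar)
    (hne : mulV P (mulV A (xG (kstar - 1)) - b) ≠ 0)
    (hdec : ∀ k, 0 < k → k < kstar →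
      ‖mulV P (mulV A (xG k) - b)‖ < ‖mulV P (mulV A (xG (k - 1)) - b)‖) :
    ∀ k ≤ kstar, x k = xG k :=
  stmt_19_general A P hA hP hsym b q hq m hm x xG r0 hr0 β hstep hopt hGmem hGopt kstar hdec
end
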